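/- arXiv:2101.04510 — 2 statements merged into one kernel-verified Lean document; each statement's English description precedes it below -/
import Mathlib

section
/- In the case of exponential utility U(λ) = (1/γ) e^{γλ} with γ ≠ 0, the value iteration Vₙ = T Vₙ₋₁ with V₀(t,i,λ) = U(λ) admits the multiplicative splitting Vₙ(t,i,λ) = e^{γλ} hₙ(t,i), where h₀ ≡ 1/γ and hₙ(t,i) = inf_{a ∈ A(i)} Σⱼ ∫ e^{γ (C(i,a)/α)(e^{−αt} − e^{−α(t+s)})} hₙ₋₁(t+s, j) Q(ds, j | i, a). -/
open MeasureTheory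

/-- The Bellman operator of the augmented semi-Markov decision problem. -/
noncomputable def bellman {E A : Type*} [MeasurableSpace E]
    (Adm : E → Set A) (C : E → A → ℝ) (Q : E → A → Measure (ℝ × E)) (α : ℝ)
    (v : ℝ → E → ℝ → ℝ) : ℝ → E → ℝ → ℝ :=
  fun t i lam => ⨅ a ∈ Adm i, ∫ p : ℝ × E,
    v (t + p.1) p.2
      (lam + C i a / α * (Real.exp (-α * t) - Real.exp (-α * (t + p.1)))) ∂(Q i a)

/-- For the exponential utility `U(λ) = (1/γ)e^{γλ}`, the value iteration
`Vₙ = T Vₙ₋₁`, `V₀(t,i,λ) = U(λ)`, splits multiplicatively as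
`Vₙ(t,i,λ) = e^{γλ} hₙ(t,i)` with `h₀ ≡ 1/γ` and
`hₙ(t,i) = inf_a ∑ⱼ ∫ e^{γ(C(i,a)/α)(e^{−αt} − e^{−α(t+s)})} hₙ₋₁(t+s,j) Q(ds,j|i,a)`. -/
theorem exponential_utility_split {E A : Type*} [MeasurableSpace E] [Countable E]
    (Adm : E → Set A) (C : E → A → ℝ) (Q : E → A → Measure (ℝ × E))
    (α γ : ℝ) (hα : 0 < α) (hγ : γ ≠ 0)
    (V : ℕ → ℝ → E → ℝ → ℝ)
    (hV0 : ∀ t i lam, V 0 t i lam = (1 / γ) * Real.exp (γ * lam))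
    (hVrec : ∀ n, V (n + 1) = bellman Adm C Q α (V n))
    (h : ℕ → ℝ → E → ℝ)
    (hh0 : ∀ t i, h 0 t i = 1 / γ)
    (hhrec : ∀ n t i, h (n + 1) t i =
      ⨅ a ∈ Adm i, ∫ p : ℝ × E,
        Real.exp (γ * (C i a / α) *
            (Real.exp (-α * t) - Real.exp (-α * (t + p.1)))) *
          h n (t + p.1) p.2 ∂(Q i a)) :
    ∀ n t i lam, V n t i lam = Real.exp (γ * lam) * h n t i := by
  intro n
  induction n with
  | zero =>
    intro t i lam
    rw [hV0, hh0]; ring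
  | succ n ih =>
    intro t i lam
    rw [hVrec, hhrec]
    show (⨅ a ∈ Adm i, ∫ p : ℝ × E,
        V n (t + p.1) p.2
          (lam + C i a / α * (Real.exp (-α * t) - Real.exp (-α * (t + p.1)))) ∂(Q i a))
      = _
    have key : ∀ a, (∫ p : ℝ × E,
        V n (t + p.1) p.2
          (lam + C i a / α * (Real.exp (-α * t) - Real.exp (-α * (t + p.1)))) ∂(Q i a))
        = Real.exp (γ * lam) * ∫ p : ℝ × E,
            Real.exp (γ * (C i a / α) *
                (Real.exp (-α * t) - Real.exp (-α * (t + p.1)))) *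
              h n (t + p.1) p.2 ∂(Q i a) := by
      intro a
      rw [← integral_const_mul]
      congr 1; funext p
      rw [ih]
      rw [← mul_assoc, ← Real.exp_add]
      ring_nf
    simp only [key]
    rw [Real.mul_iInf_of_nonneg (Real.exp_nonneg _)]
    exact iInf_congr fun a => (Real.mul_iInf_of_nonneg (Real.exp_nonneg _) _).symm
end

section
/- Let T be a monotone operator on functions and suppose Vₙ₊₁ = T Vₙ, Vₙ + εₙ ≥ V∞ for all n, V∞ ≤ T V∞, and T(Vₙ + εₙ) ≤ Vₙ₊₁ + εₙ₊₁ with εₙ → 0 pointwise. Then V∞ is a fixed point of T: T V∞ = V∞. -/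
open Filter

/-- Abstract fixed-point argument: if `T` is monotone, `Vₙ₊₁ = T Vₙ`,
`Vₙ ≤ V∞ ≤ Vₙ + εₙ` for all `n`, `V∞ ≤ T V∞`, `T(Vₙ + εₙ) ≤ Vₙ₊₁ + εₙ₊₁`, and
`εₙ → 0` pointwise, then `T V∞ = V∞`. -/
theorem limit_value_is_fixed_point {S : Type*}
    (T : (S → ℝ) → (S → ℝ)) (hT : ∀ f g : S → ℝ, f ≤ g → T f ≤ T g)
    (V : ℕ → S → ℝ) (eps : ℕ → S → ℝ) (Vinf : S → ℝ)
    (hrec : ∀ n, V (n + 1) = T (V n))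
    (hle : ∀ n, V n ≤ Vinf)
    (hub : ∀ n, Vinf ≤ fun x => V n x + eps n x)
    (hsub : Vinf ≤ T Vinf)
    (hTeps : ∀ n, T (fun x => V n x + eps n x) ≤ fun x => V (n + 1) x + eps (n + 1) x)
    (heps : ∀ x, Tendsto (fun n => eps n x) atTop (nhds 0)) :
    T Vinf = Vinf := by
  refine le_antisymm (fun x => ?_) hsub
  have key : ∀ n, T Vinf x ≤ Vinf x + eps (n + 1) x := by
    intro n
    calc T Vinf x ≤ T (fun y => V n y + eps n y) x := hT _ _ (hub n) x
      _ ≤ V (n + 1) x + eps (n + 1) x := hTeps n x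
      _ ≤ Vinf x + eps (n + 1) x := by linarith [hle (n + 1) x]
  have hlim : Tendsto (fun n => Vinf x + eps (n + 1) x) atTop (nhds (Vinf x)) := by
    have := ((heps x).comp (tendsto_add_atTop_nat 1)).const_add (Vinf x)
    simpa using this
  exact ge_of_tendsto' hlim key
end
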